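/- Let a ∈ ℤ, b ∈ ℤ ∪ {+∞} with a < b, and let p be a density with support S_p = {a, a+1, …, b}. For z ∈ ℤ set l_z(k) := (1_{k ≤ z} − P_p(≤z))·1_{S_p}(k), where P_p(≤z) := Σ_{k ≤ z} p(k), and define f_z^p(x) := (1/p(x)) Σ_{k=a}^{x−1} l_z(k) p(k) for x ∈ S_p (empty sums equal 0) and f_z^p(x) := 0 for x ∉ S_p. Then f_z^p(a) = 0, x ↦ f_z^p(x)p(x) is bounded on S_p and tends to 0 as x → +∞ when b = +∞, and f_z^p solves the Stein equation: T1(f_z^p, p)(x) = l_z(x) for every x ∈ ℤ. -/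

import Mathlib

open Filter Classical

/-- The Stein operator `T1` associated with a density `p` with support `S`:
`T1(f,p)(x) = (f(x+1)p(x+1) - f(x)p(x))/p(x)` for `x ∈ S`, and `0` otherwise. -/
noncomputable def T1 (S : Set ℤ) (f p : ℤ → ℝ) : ℤ → ℝ :=
  S.indicator (fun x => (f (x + 1) * p (x + 1) - f x * p x) / p x)

/-!
Put `q := l_z · p`. Since `l_z` is the indicator of `{k ≤ z}` centred by its `p`-mean, `q` has
total sum `0`. Hence `f_z p` is the partial sum `x ↦ ∑_{a ≤ k < x} q k` on all of `ℤ`: on `S_p` by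
definition, and past `b` because the partial sum there is the full sum `0`. The Stein equation is
then the telescoping identity of partial sums, the bound is `∑ |q|`, and the limit is `∑ q = 0`.
-/

open Finset Topology

section PartialSums

variable {M : Type*} [AddCommMonoid M] [TopologicalSpace M] {q : ℤ → M} {a : ℤ}

theorem HasSum.tendsto_sum_Ico_atTop {s : M} (hq : HasSum q s) (hqa : ∀ k < a, q k = 0) :
    Tendsto (fun x => ∑ k ∈ Ico a x, q k) atTop (𝓝 s) := by
  refine (hq.comp tendsto_Ico_neg_atTop_atTop).congr' ?_
  filter_upwards [eventually_ge_atTop (-a)] with x hx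
  refine (sum_subset (Ico_subset_Ico_left (by omega)) fun k hk hka => hqa k ?_).symm
  simp only [mem_Ico] at hk hka
  omega

theorem interval_subset_Ico_of_notMem {b : WithTop ℤ} {x : ℤ} (hax : a ≤ x)
    (hx : x ∉ {k : ℤ | a ≤ k ∧ (k : WithTop ℤ) ≤ b}) :
    {k : ℤ | a ≤ k ∧ (k : WithTop ℤ) ≤ b} ⊆ Ico a x := by
  rintro k ⟨hak, hkb⟩
  have hbx : b < x := not_le.mp fun h => hx ⟨hax, h⟩
  exact mem_Ico.mpr ⟨hak, WithTop.coe_lt_coe.mp (hkb.trans_lt hbx)⟩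

theorem sum_Ico_eq_zero_of_notMem [T2Space M] {b : WithTop ℤ} {x : ℤ} (hq : HasSum q 0)
    (hsupp : ∀ k ∉ {k : ℤ | a ≤ k ∧ (k : WithTop ℤ) ≤ b}, q k = 0)
    (hx : x ∉ {k : ℤ | a ≤ k ∧ (k : WithTop ℤ) ≤ b}) :
    ∑ k ∈ Ico a x, q k = 0 := by
  rcases lt_or_ge x a with hxa | hax
  · rw [Ico_eq_empty_of_le hxa.le, sum_empty]
  · refine (hasSum_sum_of_ne_finset_zero fun k hk => hsupp k ?_).unique hq
    exact fun hkS => hk (interval_subset_Ico_of_notMem hax hx hkS)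

end PartialSums

theorem hasSum_of_tsum_subtype {β : Type*} {S : Set β} {p : β → ℝ} {m : ℝ} (hm : m ≠ 0)
    (hnull : ∀ x ∉ S, p x = 0) (hmass : ∑' x : S, p x = m) : HasSum p m := by
  have hs : Summable (fun x : S => p x) := by
    by_contra h
    exact hm (hmass ▸ tsum_eq_zero_of_not_summable h)
  refine (hasSum_subtype_iff_of_support_subset fun x hx => ?_).mp (hmass ▸ hs.hasSum)
  by_contra hxS
  exact hx (hnull x hxS)

theorem HasSum.centered_indicator_mul {β : Type*} {p : β → ℝ} (hp : HasSum p 1)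
    (P : β → Prop) [DecidablePred P] :
    HasSum (fun k => ((if P k then 1 else 0) - ∑' k : {k // P k}, p k) * p k) 0 := by
  have hP : HasSum (fun k => (if P k then 1 else 0) * p k) (∑' k : {k // P k}, p k) := by
    refine ((hasSum_subtype_iff_indicator (s := {k | P k})).mp
      (hp.summable.subtype _).hasSum).congr_fun fun k => ?_
    by_cases hk : P k <;> simp [hk]
  simpa [sub_mul] using hP.sub (hp.mul_left (∑' k : {k // P k}, p k))

theorem stmt_2
    (a : ℤ) (b : WithTop ℤ) (hab : (a : WithTop ℤ) < b)
    (S : Set ℤ) (hS : S = {x : ℤ | a ≤ x ∧ (x : WithTop ℤ) ≤ b})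
    (p : ℤ → ℝ)
    (hpos : ∀ x ∈ S, 0 < p x) (hnull : ∀ x ∉ S, p x = 0)
    (hmass : ∑' x : S, p x = 1)
    (z : ℤ)
    (Pz : ℝ) (hPz : Pz = ∑' k : {k : ℤ // k ≤ z}, p (k : ℤ))
    (lz : ℤ → ℝ)
    (hlz : lz = S.indicator (fun k => (if k ≤ z then (1 : ℝ) else 0) - Pz))
    (fz : ℤ → ℝ)
    (hfz : ∀ x : ℤ, fz x =
      if x ∈ S then (1 / p x) * ∑ k ∈ Finset.Icc a (x - 1), lz k * p k else 0) :
    fz a = 0 ∧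
    (∃ M : ℝ, ∀ x ∈ S, |fz x * p x| ≤ M) ∧
    (b = ⊤ → Tendsto (fun x : ℤ => fz x * p x) atTop (nhds 0)) ∧
    (∀ x : ℤ, T1 S fz p x = lz x) := by
  subst hS hlz
  set S := {x : ℤ | a ≤ x ∧ (x : WithTop ℤ) ≤ b}
  set q : ℤ → ℝ := fun k => S.indicator (fun k => (if k ≤ z then (1 : ℝ) else 0) - Pz) k * p k
  have hqS : ∀ k ∉ S, q k = 0 := fun k hk => by simp [q, hnull k hk]
  have hq : HasSum q 0 := by
    refine ((hasSum_of_tsum_subtype one_ne_zero hnull hmass).centered_indicator_mul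
      (· ≤ z)).congr_fun fun k => ?_
    by_cases hk : k ∈ S
    · simp [q, hk, hPz]
    · simp [q, hnull k hk]
  have hG : ∀ x, fz x * p x = ∑ k ∈ Ico a x, q k := by
    intro x
    by_cases hx : x ∈ S
    · rw [hfz, if_pos hx, Icc_sub_one_right_eq_Ico, one_div, mul_comm, mul_inv_cancel_left₀
        (hpos x hx).ne']
    · rw [hfz, if_neg hx, zero_mul, sum_Ico_eq_zero_of_notMem hq hqS hx]
  refine ⟨?_, ⟨∑' k, |q k|, fun x _ => ?_⟩, fun _ => ?_, fun x => ?_⟩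
  · have hpa : p a ≠ 0 := (hpos a ⟨le_rfl, hab.le⟩).ne'
    simpa [hpa] using hG a
  · rw [hG]
    exact (abs_sum_le_sum_abs _ _).trans (hq.summable.abs.sum_le_tsum _ fun _ _ => abs_nonneg _)
  · simp_rw [hG]
    exact hq.tendsto_sum_Ico_atTop fun k hk => hqS k fun h => (h.1.trans_lt hk).false
  · by_cases hx : x ∈ S
    · have hax : a ≤ x := hx.1
      rw [T1, Set.indicator_of_mem hx, hG, hG, ← insert_Ico_right_eq_Ico_add_one hax,
        sum_insert right_notMem_Ico, add_sub_cancel_right, mul_div_cancel_right₀ _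
        (hpos x hx).ne']
    · rw [T1, Set.indicator_of_notMem hx, Set.indicator_of_notMem hx]
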